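/- Every bicategory is biequivalent to a 2-category, stated concretely: for every bicategory B there exist a strict bicategory C and a pseudofunctor F : B ⥤ C such that (i) F is surjective on objects, and (ii) for every pair of objects a, b of B, the functor induced by F on hom-categories, from the category of 1-cells a ⟶ b (with 2-cells as morphisms) to the category of 1-cells F.obj a ⟶ F.obj b, is fully faithful and essentially surjective (i.e., an equivalence of categories). -/

import Mathlib

open CategoryTheory CategoryTheory.Bicategory Quiver

universe w v u

namespace Strictification

variable {B : Type u} [Bicategory.{w, v} B]

/-- Evaluation of a path of 1-cells as a 1-cell, bracketed on the left, starting with `𝟙`. -/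
def ev {a : B} : ∀ {b : B}, Path a b → (a ⟶ b)
  | _, .nil => 𝟙 a
  | _, .cons p f => ev p ≫ f

@[simp] lemma ev_nil {a : B} : ev (Path.nil : Path a a) = 𝟙 a := rfl

@[simp] lemma ev_cons {a b c : B} (p : Path a b) (f : b ⟶ c) :
    ev (p.cons f) = ev p ≫ f := rfl

/-- `ev` is "monoidal" with respect to path composition. -/
def evComp {a b : B} (p : Path a b) : ∀ {c : B} (q : Path b c), ev (p.comp q) ≅ ev p ≫ ev q
  | _, .nil => (ρ_ (ev p)).symm
  | _, .cons q f => whiskerRightIso (evComp p q) f ≪≫ α_ _ _ _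

@[simp] lemma evComp_nil {a b : B} (p : Path a b) :
    evComp p Path.nil = (ρ_ (ev p)).symm := rfl

@[simp] lemma evComp_cons {a b c d : B} (p : Path a b) (q : Path b c) (f : c ⟶ d) :
    evComp p (q.cons f) = whiskerRightIso (evComp p q) f ≪≫ α_ _ _ _ := rfl

lemma ev_congr {a b : B} {p q : Path a b} (h : p = q) : ev p = ev q := by rw [h]

lemma evComp_nil_left : ∀ {a b : B} (q : Path a b),
    (evComp Path.nil q).hom = eqToHom (ev_congr (q.nil_comp)) ≫ (λ_ (ev q)).inv
  | _, _, .nil => by simp [unitors_inv_equal]; exact (Category.id_comp _).symm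
  | _, _, .cons q f => by
    have ih := evComp_nil_left q
    simp only [evComp_cons, Iso.trans_hom, whiskerRightIso_hom, ih]
    dsimp only [ev_nil]
    simp only [comp_whiskerRight, eqToHom_whiskerRight, Category.assoc]
    congr 1
    simp

lemma evComp_nil_left_inv {a b : B} (q : Path a b) :
    (evComp Path.nil q).inv = (λ_ (ev q)).hom ≫ eqToHom (ev_congr (q.nil_comp)).symm := by
  apply (cancel_epi (evComp Path.nil q).hom).1
  rw [Iso.hom_inv_id, evComp_nil_left]
  simp

lemma evComp_assoc : ∀ {a b c d : B} (p : Path a b) (q : Path b c) (r : Path c d),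
    (evComp (p.comp q) r).hom ≫ ((evComp p q).hom ▷ ev r) ≫ (α_ (ev p) (ev q) (ev r)).hom
      = eqToHom (ev_congr (p.comp_assoc q r)) ≫ (evComp p (q.comp r)).hom ≫
          (ev p ◁ (evComp q r).hom)
  | _, _, _, _, p, q, .nil => by
    simp
    exact (Category.id_comp _).symm
  | _, _, _, _, p, q, .cons r f => by
    have ih := evComp_assoc p q r
    dsimp only [Path.comp_cons, ev_cons]
    simp only [evComp_cons, Iso.trans_hom, whiskerRightIso_hom, Category.assoc, ev_cons]
    rw [← associator_naturality_left_assoc]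
    rw [← pentagon]
    rw [← comp_whiskerRight_assoc, ← comp_whiskerRight_assoc]
    rw [Category.assoc, ih]
    simp only [comp_whiskerRight, eqToHom_whiskerRight, Category.assoc]
    rw [associator_naturality_middle_assoc]
    simp [Bicategory.whiskerLeft_comp]

lemma evComp_assoc' {a b c d : B} (p : Path a b) (q : Path b c) (r : Path c d) :
    (evComp (p.comp q) r).hom
      = eqToHom (ev_congr (p.comp_assoc q r)) ≫ (evComp p (q.comp r)).hom ≫
          (ev p ◁ (evComp q r).hom) ≫ (α_ (ev p) (ev q) (ev r)).inv ≫
          ((evComp p q).inv ▷ ev r) := by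
  rw [← cancel_mono ((evComp p q).hom ▷ ev r), ← cancel_mono (α_ (ev p) (ev q) (ev r)).hom]
  simp only [Category.assoc]
  rw [evComp_assoc]
  simp

lemma evComp_assoc_inv {a b c d : B} (p : Path a b) (q : Path b c) (r : Path c d) :
    (evComp (p.comp q) r).inv
      = ((evComp p q).hom ▷ ev r) ≫ (α_ (ev p) (ev q) (ev r)).hom ≫
          (ev p ◁ (evComp q r).inv) ≫ (evComp p (q.comp r)).inv ≫
          eqToHom (ev_congr (p.comp_assoc q r)).symm := by
  rw [← cancel_epi (evComp (p.comp q) r).hom, Iso.hom_inv_id, evComp_assoc']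
  simp

lemma conj_eqToHom_left {a b c : B} (p : Path a b) {q q' : Path b c} (h : q = q')
    (e : ev q = ev q') (e' : ev (p.comp q) = ev (p.comp q')) :
    (evComp p q).hom ≫ (ev p ◁ eqToHom e) ≫ (evComp p q').inv = eqToHom e' := by
  subst h; simp

lemma conj_eqToHom_right {a b c : B} {p p' : Path a b} (h : p = p') (q : Path b c)
    (e : ev p = ev p') (e' : ev (p.comp q) = ev (p'.comp q)) :
    (evComp p q).hom ≫ (eqToHom e ▷ ev q) ≫ (evComp p' q).inv = eqToHom e' := by
  subst h; simp

end Strictification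

/-- The strictification of a bicategory: objects are those of `B` (universe-lifted). -/
def Strictification (B : Type u) [Bicategory.{w, v} B] : Type (max u v w) :=
  ULift.{max v w} B

attribute [reducible] Strictification

namespace Strictification

variable {B : Type u} [Bicategory.{w, v} B]

/-- 1-cells of the strictification: universe-lifted paths of 1-cells of `B`. -/
def Hom1 (a b : Strictification B) : Type (max u v w) :=
  ULift.{w} (Path a.down b.down)

attribute [reducible] Hom1

/-- 2-cells of the strictification: 2-cells in `B` between the evaluations. -/
instance homCat (a b : Strictification B) : Category.{max u v w} (Hom1 a b) where
  Hom p q := ULift.{max u v} (ev p.down ⟶ ev q.down)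
  id p := ⟨𝟙 (ev p.down)⟩
  comp η θ := ⟨η.down ≫ θ.down⟩

instance homCatMk (a b : B) : Category.{max u v w} (Hom1 (⟨a⟩ : Strictification B) ⟨b⟩) :=
  homCat _ _

@[simp] lemma down_id {a b : Strictification B} (p : Hom1 a b) :
    (𝟙 p : p ⟶ p).down = 𝟙 (ev p.down) := rfl

@[simp] lemma down_comp {a b : Strictification B} {p q r : Hom1 a b} (η : p ⟶ q) (θ : q ⟶ r) :
    (η ≫ θ).down = η.down ≫ θ.down := rfl

lemma hom_ext {a b : Strictification B} {p q : Hom1 a b} {η θ : p ⟶ q}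
    (h : η.down = θ.down) : η = θ := ULift.ext η θ h

lemma hom1_congr {a b : Strictification B} {p q : Hom1 a b} (h : p = q) :
    ev p.down = ev q.down := by rw [h]

@[simp] lemma down_eqToHom {a b : Strictification B} {p q : Hom1 a b} (h : p = q) :
    (eqToHom h).down = eqToHom (hom1_congr h) := by
  subst h; rfl

set_option maxHeartbeats 1000000 in
instance bicategory : Bicategory.{max u v w, max u v w} (Strictification B) where
  Hom := Hom1
  id a := ⟨Path.nil⟩
  comp p q := ⟨p.down.comp q.down⟩
  homCategory a b := homCat a b
  whiskerLeft p _ _ η :=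
    ⟨(evComp p.down _).hom ≫ ev p.down ◁ η.down ≫ (evComp p.down _).inv⟩
  whiskerRight η q :=
    ⟨(evComp _ q.down).hom ≫ η.down ▷ ev q.down ≫ (evComp _ q.down).inv⟩
  associator p q r := @eqToIso _ (homCat _ _) _ _ (ULift.ext _ _ (Path.comp_assoc p.down q.down r.down))
  leftUnitor p := @eqToIso _ (homCat _ _) _ _ (ULift.ext _ _ (Path.nil_comp p.down))
  rightUnitor p := @eqToIso _ (homCat _ _) _ _ (ULift.ext _ _ (Path.comp_nil p.down))
  whiskerLeft_id := by intros; apply hom_ext; simp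
  whiskerLeft_comp := by intros; apply hom_ext; simp
  id_whiskerLeft := by
    intros; apply hom_ext
    simp [evComp_nil_left, evComp_nil_left_inv]
  comp_whiskerLeft := by
    intros; apply hom_ext
    simp [evComp_assoc', evComp_assoc_inv, whisker_exchange_assoc]
  id_whiskerRight := by intros; apply hom_ext; simp
  comp_whiskerRight := by intros; apply hom_ext; simp
  whiskerRight_id := by intros; apply hom_ext; simp; exact ((Category.id_comp _).trans (Category.comp_id _)).symm
  whiskerRight_comp := by
    intros; apply hom_ext
    simp [evComp_assoc', evComp_assoc_inv, whisker_exchange_assoc]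
    rw [← associator_inv_naturality_left_assoc, Iso.inv_hom_id_assoc, whisker_exchange_assoc]
    simp
  whisker_assoc := by
    intros; apply hom_ext
    simp [evComp_assoc', evComp_assoc_inv, whisker_exchange_assoc]
  whisker_exchange := by
    intros; apply hom_ext
    simp [whisker_exchange_assoc, whisker_exchange]
  pentagon := by
    intro a b c d e f g h i
    apply hom_ext
    dsimp
    rw [down_eqToHom, down_eqToHom, down_eqToHom, down_eqToHom, down_eqToHom,
      conj_eqToHom_right (Path.comp_assoc f.down g.down h.down) i.down,
      conj_eqToHom_left f.down (Path.comp_assoc g.down h.down i.down)]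
    all_goals simp [eqToHom_trans, Path.comp_assoc]
  triangle := by
    intro a b c f g
    apply hom_ext
    dsimp
    erw [down_eqToHom, down_eqToHom]
    rw [conj_eqToHom_left f.down (Path.nil_comp g.down)]
    all_goals simp [eqToHom_trans]
    erw [Bicategory.id_whiskerRight]
    simp

instance strict : Bicategory.Strict (Strictification B) where
  id_comp f := ULift.ext _ _ (Path.nil_comp f.down)
  comp_id f := ULift.ext _ _ (Path.comp_nil f.down)
  assoc f g h := ULift.ext _ _ (Path.comp_assoc f.down g.down h.down)
  leftUnitor_eqToIso f := rfl
  rightUnitor_eqToIso f := rfl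
  associator_eqToIso f g h := rfl

section
variable {a b c : Strictification B}

@[simp] lemma id1_down (a : Strictification B) : (𝟙 a : a ⟶ a).down = Path.nil := rfl

@[simp] lemma comp1_down (p : a ⟶ b) (q : b ⟶ c) : (p ≫ q).down = p.down.comp q.down := rfl

@[simp] lemma id2_down (p : a ⟶ b) : (𝟙 p : p ⟶ p).down = 𝟙 (ev p.down) := rfl

@[simp] lemma comp2_down {p q r : a ⟶ b} (η : p ⟶ q) (θ : q ⟶ r) :
    (η ≫ θ).down = η.down ≫ θ.down := rfl

@[simp] lemma whiskerLeft_down (p : a ⟶ b) {q q' : b ⟶ c} (η : q ⟶ q') :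
    (p ◁ η).down
      = (evComp p.down q.down).hom ≫ ev p.down ◁ η.down ≫ (evComp p.down q'.down).inv := rfl

@[simp] lemma whiskerRight_down {p p' : a ⟶ b} (η : p ⟶ p') (q : b ⟶ c) :
    (η ▷ q).down
      = (evComp p.down q.down).hom ≫ η.down ▷ ev q.down ≫ (evComp p'.down q.down).inv := rfl

@[simp] lemma associator_down (p : a ⟶ b) (q : b ⟶ c) {d : Strictification B} (r : c ⟶ d) :
    (α_ p q r).hom.down = eqToHom (ev_congr (p.down.comp_assoc q.down r.down)) := by
  exact down_eqToHom (ULift.ext _ _ (Path.comp_assoc p.down q.down r.down))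

@[simp] lemma associator_inv_down (p : a ⟶ b) (q : b ⟶ c) {d : Strictification B} (r : c ⟶ d) :
    (α_ p q r).inv.down = eqToHom (ev_congr (p.down.comp_assoc q.down r.down)).symm := by
  exact down_eqToHom (ULift.ext _ _ (Path.comp_assoc p.down q.down r.down)).symm

@[simp] lemma leftUnitor_down (p : a ⟶ b) :
    (λ_ p).hom.down = eqToHom (ev_congr (p.down.nil_comp)) := by
  exact down_eqToHom (ULift.ext _ _ (Path.nil_comp p.down))

@[simp] lemma leftUnitor_inv_down (p : a ⟶ b) :
    (λ_ p).inv.down = eqToHom (ev_congr (p.down.nil_comp)).symm := by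
  exact down_eqToHom (ULift.ext _ _ (Path.nil_comp p.down)).symm

@[simp] lemma rightUnitor_down (p : a ⟶ b) :
    (ρ_ p).hom.down = eqToHom (ev_congr (p.down.comp_nil)) := by
  exact down_eqToHom (ULift.ext _ _ (Path.comp_nil p.down))

@[simp] lemma rightUnitor_inv_down (p : a ⟶ b) :
    (ρ_ p).inv.down = eqToHom (ev_congr (p.down.comp_nil)).symm := by
  exact down_eqToHom (ULift.ext _ _ (Path.comp_nil p.down)).symm

end

/-- Build an isomorphism of 1-cells in the strictification from one in `B`. -/
def mkIso {a b : Strictification B} {p q : Hom1 a b} (e : ev p.down ≅ ev q.down) : p ≅ q where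
  hom := ⟨e.hom⟩
  inv := ⟨e.inv⟩
  hom_inv_id := hom_ext (by simp)
  inv_hom_id := hom_ext (by simp)

/-- The comparison 2-cell for identities. -/
def mapIdIso (a : B) : @Iso (Hom1 ⟨a⟩ ⟨a⟩) (homCat _ _) ⟨Path.nil.cons (𝟙 a)⟩ ⟨Path.nil⟩ :=
  mkIso (λ_ (𝟙 a))

/-- The comparison 2-cell for compositions. -/
def mapCompIso {a b c : B} (f : a ⟶ b) (g : b ⟶ c) :
    @Iso (Hom1 ⟨a⟩ ⟨c⟩) (homCat _ _) ⟨Path.nil.cons (f ≫ g)⟩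
      ⟨(Path.nil.cons f).comp (Path.nil.cons g)⟩ :=
  mkIso (α_ (𝟙 _) f g).symm

@[simp] lemma mapIdIso_hom_down (a : B) : (mapIdIso a).hom.down = (λ_ (𝟙 a)).hom := rfl
@[simp] lemma mapIdIso_inv_down (a : B) : (mapIdIso a).inv.down = (λ_ (𝟙 a)).inv := rfl
@[simp] lemma mapCompIso_hom_down {a b c : B} (f : a ⟶ b) (g : b ⟶ c) :
    (mapCompIso f g).hom.down = (α_ (𝟙 a) f g).inv := rfl
@[simp] lemma mapCompIso_inv_down {a b c : B} (f : a ⟶ b) (g : b ⟶ c) :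
    (mapCompIso f g).inv.down = (α_ (𝟙 a) f g).hom := rfl

/-- The canonical pseudofunctor from a bicategory to its strictification. -/
def pseudofunctor : Pseudofunctor B (Strictification B) where
  obj a := ⟨a⟩
  map f := ⟨Path.nil.cons f⟩
  map₂ η := ⟨𝟙 _ ◁ η⟩
  map₂_id f := hom_ext (by simp)
  map₂_comp η θ := hom_ext (by change _ = _ ≫ _; simp)
  mapId a := mapIdIso a
  mapComp f g := mapCompIso f g
  map₂_whisker_left := by intros; apply hom_ext; simp; erw [whiskerLeft_down]; simp
  map₂_whisker_right := by intros; apply hom_ext; simp; erw [whiskerRight_down]; simp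
  map₂_associator := by
    intros; apply hom_ext; simp
    bicategory_coherence
  map₂_left_unitor := by intros; apply hom_ext; simp
  map₂_right_unitor := by intros; apply hom_ext; simp


instance mapFunctor_isEquivalence (a b : B) :
    ((pseudofunctor (B := B)).mapFunctor a b).IsEquivalence where
  faithful := by
    constructor
    intro f g η θ h
    have h' := congrArg ULift.down h
    simp only [PrelaxFunctor.mapFunctor] at h'
    change 𝟙 a ◁ η = 𝟙 a ◁ θ at h'
    simp only [Bicategory.id_whiskerLeft] at h'
    rwa [cancel_epi, cancel_mono] at h'
  full := by
    constructor
    intro f g η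
    refine ⟨(λ_ f).inv ≫ η.down ≫ (λ_ g).hom, ?_⟩
    apply hom_ext
    change 𝟙 a ◁ ((λ_ f).inv ≫ η.down ≫ (λ_ g).hom) = η.down
    simp
    erw [Category.assoc, Iso.hom_inv_id, Category.comp_id]
  essSurj := by
    constructor
    intro p
    exact ⟨ev p.down, ⟨mkIso (λ_ (ev p.down))⟩⟩

end Strictification

open Strictification in
/-- The coherence theorem: every bicategory is biequivalent to a 2-category. Concretely, for
every bicategory `B` there are a strict bicategory `C` and a pseudofunctor `F : B ⥤ C` which
is surjective on objects and a local equivalence, i.e. each induced functor on hom-categories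
is fully faithful and essentially surjective. -/
theorem every_bicategory_is_biequivalent_to_a_two_category
    (B : Type u) [Bicategory.{w, v} B] :
    ∃ (C : Type (max u v w)) (_ : Bicategory.{max u v w, max u v w} C)
      (_ : Bicategory.Strict C) (F : Pseudofunctor B C),
      Function.Surjective F.obj ∧
        ∀ a b : B, (F.mapFunctor a b).IsEquivalence := by
  refine ⟨Strictification B, inferInstance, inferInstance, pseudofunctor, ?_, ?_⟩
  · intro c
    exact ⟨c.down, rfl⟩
  · intro a b
    exact mapFunctor_isEquivalence a b
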